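/- Let Φ_n be the n-th monic orthogonal polynomial of a nontrivial probability measure on the unit circle and λ ∈ ∂𝔻. Then the paraorthogonal polynomial Φ_{n+1}(z; λ) = zΦ_n(z) − conj(λ)Φ_n^*(z) has n+1 distinct zeros, all lying on the unit circle. -/

import Mathlib

/-!
Over ℂ, `Φ = ∏ (z - a)` over its zeros `a ∈ 𝔻`, and then `Φ^* = ∏ (1 - ā z)`. Since
`|1 - ā z|² - |z - a|² = (1 - |a|²)(1 - |z|²)`, we get `|z Φ(z)| < |Φ^*(z)|` inside the disc and
`|z Φ(z)| > |Φ^*(z)|` outside it, so every zero of `P = z Φ - λ̄ Φ^*` lies on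
the circle. At such a zero `u` the logarithmic derivatives of `Φ` and `Φ^*` combine into
`P'(u) = Φ(u) (1 + ∑ₐ (1 - |a|²) / |u - a|²)`, a sum of Poisson kernels, which is nonzero. So all
`n + 1` zeros of the monic polynomial `P` of degree `n + 1` are simple.
-/

open Polynomial

/-- The reversed, coefficient-conjugated polynomial `τ_n(p)(z) = z^n conj(p(1/conj z))`. -/
noncomputable def polyStar (n : ℕ) (p : Polynomial ℂ) : Polynomial ℂ :=
  (p.map (starRingEnd ℂ)).reflect n

open ComplexConjugate

lemma polyStar_mul {p q : ℂ[X]} {m k : ℕ} (hp : p.natDegree ≤ m) (hq : q.natDegree ≤ k) :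
    polyStar (m + k) (p * q) = polyStar m p * polyStar k q := by
  rw [polyStar, Polynomial.map_mul]
  exact reflect_mul _ _ (natDegree_map_le.trans hp) (natDegree_map_le.trans hq)

lemma natDegree_polyStar_le {n : ℕ} {p : ℂ[X]} (hp : p.natDegree ≤ n) :
    (polyStar n p).natDegree ≤ n :=
  natDegree_reflect_le.trans (max_le le_rfl (natDegree_map_le.trans hp))

lemma polyStar_X_sub_C (a : ℂ) : polyStar 1 (X - C a) = 1 - C (conj a) * X := by
  rw [polyStar, Polynomial.map_sub, map_X, map_C, reflect_sub, ← pow_one X, reflect_monomial,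
    reflect_C]
  simp [revAt_le]

lemma polyStar_multiset_prod_X_sub_C (s : Multiset ℂ) :
    polyStar (Multiset.card s) (s.map (X - C ·)).prod
      = (s.map fun a => 1 - C (conj a) * X).prod := by
  induction s using Multiset.induction_on with
  | empty => simp [polyStar]
  | cons a s ih =>
    rw [Multiset.map_cons, Multiset.prod_cons, Multiset.card_cons, add_comm,
      polyStar_mul (natDegree_X_sub_C_le a) (natDegree_multiset_prod_X_sub_C_eq_card s).le, ih,
      polyStar_X_sub_C, Multiset.map_cons, Multiset.prod_cons]

lemma Polynomial.Monic.polyStar_eq_prod_roots {Φ : ℂ[X]} (hΦ : Φ.Monic) :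
    polyStar Φ.natDegree Φ = (Φ.roots.map fun a => 1 - C (conj a) * X).prod := by
  have h := polyStar_multiset_prod_X_sub_C Φ.roots
  rwa [IsAlgClosed.card_roots_eq_natDegree,
    ← (IsAlgClosed.splits Φ).eq_prod_roots_of_monic hΦ] at h

lemma eval_derivative_multiset_prod {ι K : Type*} [Field K] (s : Multiset ι) (f : ι → K[X]) {x : K}
    (h : ∀ i ∈ s, (f i).eval x ≠ 0) :
    (derivative (s.map f).prod).eval x
      = (s.map f).prod.eval x * (s.map fun i => (derivative (f i)).eval x / (f i).eval x).sum := by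
  induction s using Multiset.induction_on with
  | empty => simp
  | cons i s ih =>
    have hi := h i (Multiset.mem_cons_self i s)
    simp only [Multiset.map_cons, Multiset.prod_cons, Multiset.sum_cons, derivative_mul, eval_add,
      eval_mul, ih fun j hj => h j (Multiset.mem_cons_of_mem hj)]
    field_simp

lemma norm_multiset_prod {α : Type*} [NormedField α] (s : Multiset α) :
    ‖s.prod‖ = (s.map (‖·‖)).prod :=
  map_multiset_prod (normHom : α →*₀ ℝ) s

lemma Polynomial.nodup_roots_of_not_isRoot_derivative {R : Type*} [CommRing R] [IsDomain R]
    {p : R[X]} (hp : p ≠ 0) (h : ∀ x, p.IsRoot x → ¬ (derivative p).IsRoot x) :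
    p.roots.Nodup := by
  classical
  refine Multiset.nodup_iff_count_le_one.mpr fun x => ?_
  rw [count_roots, ← not_lt, one_lt_rootMultiplicity_iff_isRoot hp]
  exact fun hx => h x hx.1 hx.2

lemma norm_one_sub_conj_mul_sq_sub_norm_sub_sq (a z : ℂ) :
    ‖1 - conj a * z‖ ^ 2 - ‖z - a‖ ^ 2 = (1 - ‖a‖ ^ 2) * (1 - ‖z‖ ^ 2) := by
  simp only [Complex.sq_norm, Complex.normSq_apply, Complex.sub_re, Complex.sub_im, Complex.one_re,
    Complex.one_im, Complex.mul_re, Complex.mul_im, Complex.conj_re, Complex.conj_im]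
  ring

lemma norm_sub_le_norm_one_sub_conj_mul {a z : ℂ} (ha : ‖a‖ ≤ 1) (hz : ‖z‖ ≤ 1) :
    ‖z - a‖ ≤ ‖1 - conj a * z‖ := by
  have hdiff := norm_one_sub_conj_mul_sq_sub_norm_sub_sq a z
  have hsign : 0 ≤ (1 - ‖a‖ ^ 2) * (1 - ‖z‖ ^ 2) := by
    apply mul_nonneg <;> nlinarith [norm_nonneg a, norm_nonneg z]
  nlinarith [norm_nonneg (z - a), norm_nonneg (1 - conj a * z)]

lemma norm_one_sub_conj_mul_le_norm_sub {a z : ℂ} (ha : ‖a‖ ≤ 1) (hz : 1 ≤ ‖z‖) :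
    ‖1 - conj a * z‖ ≤ ‖z - a‖ := by
  have hdiff := norm_one_sub_conj_mul_sq_sub_norm_sub_sq a z
  have hsign : (1 - ‖a‖ ^ 2) * (1 - ‖z‖ ^ 2) ≤ 0 := by
    apply mul_nonpos_of_nonneg_of_nonpos <;> nlinarith [norm_nonneg a, norm_nonneg z]
  nlinarith [norm_nonneg (z - a), norm_nonneg (1 - conj a * z)]

lemma one_sub_conj_mul_ne_zero {a z : ℂ} (ha : ‖a‖ < 1) (hz : ‖z‖ ≤ 1) : 1 - conj a * z ≠ 0 := by
  refine sub_ne_zero.mpr fun h => ?_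
  have : ‖conj a * z‖ < 1 := by
    rw [norm_mul, Complex.norm_conj]
    nlinarith [norm_nonneg a, norm_nonneg z]
  rw [← h, norm_one] at this
  exact lt_irrefl 1 this

lemma add_conj_mul_div_eq_ofReal {a u : ℂ} (hu : ‖u‖ = 1) (hua : u ≠ a) :
    u / (u - a) + u * conj a / (1 - conj a * u) = (((1 - ‖a‖ ^ 2) / ‖u - a‖ ^ 2 : ℝ) : ℂ) := by
  have huu : u * conj u = 1 := by
    rw [Complex.mul_conj, Complex.normSq_eq_norm_sq, hu]; norm_num
  have hfac : 1 - conj a * u = u * conj (u - a) := by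
    rw [map_sub]; linear_combination -huu
  have hu0 : u ≠ 0 := by rintro rfl; simp at hu
  have hsub : u - a ≠ 0 := sub_ne_zero.mpr hua
  have hcsub : conj (u - a) ≠ 0 := (_root_.map_ne_zero _).mpr hsub
  rw [hfac, mul_div_mul_left _ _ hu0, div_add_div _ _ hsub hcsub]
  push_cast
  rw [← Complex.mul_conj', ← Complex.mul_conj']
  congr 1
  rw [map_sub]
  linear_combination huu

noncomputable def paraOrthogonal (Φ : ℂ[X]) (lam : ℂ) : ℂ[X] :=
  X * Φ - C (conj lam) * polyStar Φ.natDegree Φ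

section

variable {Φ : ℂ[X]}

lemma Polynomial.Monic.eval_polyStar (hΦ : Φ.Monic) (z : ℂ) :
    (polyStar Φ.natDegree Φ).eval z = (Φ.roots.map fun a => 1 - conj a * z).prod := by
  rw [hΦ.polyStar_eq_prod_roots, eval_multiset_prod, Multiset.map_map]
  simp

lemma Polynomial.Monic.norm_eval_le_norm_eval_polyStar (hΦ : Φ.Monic)
    (hzeros : ∀ z, Φ.IsRoot z → ‖z‖ < 1) {z : ℂ} (hz : ‖z‖ ≤ 1) :
    ‖Φ.eval z‖ ≤ ‖(polyStar Φ.natDegree Φ).eval z‖ := by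
  rw [(IsAlgClosed.splits Φ).eval_eq_prod_roots_of_monic hΦ, hΦ.eval_polyStar, norm_multiset_prod,
    norm_multiset_prod, Multiset.map_map, Multiset.map_map]
  refine Multiset.prod_map_le_prod_map₀ _ _ (fun _ _ => norm_nonneg _) fun a ha => ?_
  exact norm_sub_le_norm_one_sub_conj_mul (hzeros a (isRoot_of_mem_roots ha)).le hz

lemma Polynomial.Monic.norm_eval_polyStar_le_norm_eval (hΦ : Φ.Monic)
    (hzeros : ∀ z, Φ.IsRoot z → ‖z‖ < 1) {z : ℂ} (hz : 1 ≤ ‖z‖) :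
    ‖(polyStar Φ.natDegree Φ).eval z‖ ≤ ‖Φ.eval z‖ := by
  rw [(IsAlgClosed.splits Φ).eval_eq_prod_roots_of_monic hΦ, hΦ.eval_polyStar, norm_multiset_prod,
    norm_multiset_prod, Multiset.map_map, Multiset.map_map]
  refine Multiset.prod_map_le_prod_map₀ _ _ (fun _ _ => norm_nonneg _) fun a ha => ?_
  exact norm_one_sub_conj_mul_le_norm_sub (hzeros a (isRoot_of_mem_roots ha)).le hz

lemma Polynomial.Monic.eval_polyStar_ne_zero (hΦ : Φ.Monic)
    (hzeros : ∀ z, Φ.IsRoot z → ‖z‖ < 1) {z : ℂ} (hz : ‖z‖ ≤ 1) :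
    (polyStar Φ.natDegree Φ).eval z ≠ 0 := by
  rw [hΦ.eval_polyStar, Ne, Multiset.prod_eq_zero_iff, Multiset.mem_map]
  rintro ⟨a, ha, h⟩
  exact one_sub_conj_mul_ne_zero (hzeros a (isRoot_of_mem_roots ha)) hz h

lemma isRoot_paraOrthogonal_iff {lam u : ℂ} :
    (paraOrthogonal Φ lam).IsRoot u
      ↔ u * Φ.eval u = conj lam * (polyStar Φ.natDegree Φ).eval u := by
  simp [paraOrthogonal, sub_eq_zero]

lemma Polynomial.Monic.norm_eq_one_of_isRoot_paraOrthogonal (hΦ : Φ.Monic)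
    (hzeros : ∀ z, Φ.IsRoot z → ‖z‖ < 1) {lam u : ℂ} (hlam : ‖lam‖ = 1)
    (hu : (paraOrthogonal Φ lam).IsRoot u) : ‖u‖ = 1 := by
  have h := congrArg norm (isRoot_paraOrthogonal_iff.mp hu)
  rw [norm_mul, norm_mul, Complex.norm_conj, hlam, one_mul] at h
  rcases lt_trichotomy ‖u‖ 1 with hlt | heq | hgt
  · have hpos := norm_pos_iff.mpr (hΦ.eval_polyStar_ne_zero hzeros hlt.le)
    nlinarith [hΦ.norm_eval_le_norm_eval_polyStar hzeros hlt.le, norm_nonneg u]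
  · exact heq
  · have hpos : 0 < ‖Φ.eval u‖ := norm_pos_iff.mpr fun h0 => (hzeros u h0).not_gt hgt
    nlinarith [hΦ.norm_eval_polyStar_le_norm_eval hzeros hgt.le]

lemma Polynomial.Monic.eval_derivative_paraOrthogonal (hΦ : Φ.Monic)
    (hzeros : ∀ z, Φ.IsRoot z → ‖z‖ < 1) {lam u : ℂ} (hlam : ‖lam‖ = 1)
    (hu : (paraOrthogonal Φ lam).IsRoot u) :
    (derivative (paraOrthogonal Φ lam)).eval u
      = Φ.eval u * (1 + ((Φ.roots.map fun a => (1 - ‖a‖ ^ 2) / ‖u - a‖ ^ 2).sum : ℝ)) := by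
  have hu1 := hΦ.norm_eq_one_of_isRoot_paraOrthogonal hzeros hlam hu
  have hzeros' (a) (ha : a ∈ Φ.roots) : ‖a‖ < 1 := hzeros a (isRoot_of_mem_roots ha)
  have hΦu : Φ.eval u ≠ 0 := fun h => (hzeros u h).ne hu1
  have hΦ' := (IsAlgClosed.splits Φ).eval_derivative_eq_eval_mul_sum hΦu
  have hΦstar' : (derivative (polyStar Φ.natDegree Φ)).eval u
      = (polyStar Φ.natDegree Φ).eval u
        * (Φ.roots.map fun a => -conj a / (1 - conj a * u)).sum := by
    rw [hΦ.polyStar_eq_prod_roots, eval_derivative_multiset_prod _ _ fun a ha => by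
      simpa using one_sub_conj_mul_ne_zero (hzeros' a ha) hu1.le]
    simp
  have hsum : u * (Φ.roots.map fun a => 1 / (u - a)).sum
      - u * (Φ.roots.map fun a => -conj a / (1 - conj a * u)).sum
      = ((Φ.roots.map fun a => (1 - ‖a‖ ^ 2) / ‖u - a‖ ^ 2).sum : ℝ) := by
    rw [← Multiset.sum_map_mul_left, ← Multiset.sum_map_mul_left, ← Multiset.sum_map_sub,
      ← Complex.ofRealHom_eq_coe, map_multiset_sum, Multiset.map_map]
    refine congrArg Multiset.sum (Multiset.map_congr rfl fun a ha => ?_)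
    have hua : u ≠ a := by rintro rfl; exact (hzeros' u ha).ne hu1
    rw [Function.comp_apply, Complex.ofRealHom_eq_coe, ← add_conj_mul_div_eq_ofReal hu1 hua]
    ring
  have hroot := isRoot_paraOrthogonal_iff.mp hu
  simp only [paraOrthogonal, derivative_sub, derivative_mul, derivative_X, derivative_C, eval_add,
    eval_sub, eval_mul, eval_one, eval_X, eval_C, eval_zero, hΦ', hΦstar']
  linear_combination (Φ.roots.map fun a => -conj a / (1 - conj a * u)).sum * hroot
    + Φ.eval u * hsum

lemma Polynomial.Monic.not_isRoot_derivative_paraOrthogonal (hΦ : Φ.Monic)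
    (hzeros : ∀ z, Φ.IsRoot z → ‖z‖ < 1) {lam u : ℂ} (hlam : ‖lam‖ = 1)
    (hu : (paraOrthogonal Φ lam).IsRoot u) : ¬ (derivative (paraOrthogonal Φ lam)).IsRoot u := by
  have hu1 := hΦ.norm_eq_one_of_isRoot_paraOrthogonal hzeros hlam hu
  rw [IsRoot.def, hΦ.eval_derivative_paraOrthogonal hzeros hlam hu]
  refine mul_ne_zero (fun h => (hzeros u h).ne hu1) ?_
  have hnonneg : 0 ≤ (Φ.roots.map fun a => (1 - ‖a‖ ^ 2) / ‖u - a‖ ^ 2).sum := by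
    refine Multiset.sum_nonneg fun x hx => ?_
    obtain ⟨a, ha, rfl⟩ := Multiset.mem_map.mp hx
    have ha1 := hzeros a (isRoot_of_mem_roots ha)
    exact div_nonneg (by nlinarith [norm_nonneg a]) (sq_nonneg _)
  rw [← Complex.ofReal_one, ← Complex.ofReal_add, Complex.ofReal_ne_zero]
  positivity

lemma natDegree_C_mul_polyStar_lt_natDegree_X_mul (hΦ : Φ ≠ 0) (c : ℂ) :
    (C c * polyStar Φ.natDegree Φ).natDegree < (X * Φ).natDegree := by
  rw [natDegree_X_mul hΦ]
  exact Nat.lt_succ_of_le ((natDegree_C_mul_le _ _).trans (natDegree_polyStar_le le_rfl))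

lemma monic_paraOrthogonal (hΦ : Φ.Monic) (lam : ℂ) : (paraOrthogonal Φ lam).Monic :=
  (monic_X.mul hΦ).sub_of_left
    (degree_lt_degree (natDegree_C_mul_polyStar_lt_natDegree_X_mul hΦ.ne_zero _))

lemma natDegree_paraOrthogonal (hΦ : Φ ≠ 0) (lam : ℂ) :
    (paraOrthogonal Φ lam).natDegree = Φ.natDegree + 1 := by
  rw [paraOrthogonal, natDegree_sub_eq_left_of_natDegree_lt
    (natDegree_C_mul_polyStar_lt_natDegree_X_mul hΦ _), natDegree_X_mul hΦ]

end

/-- The paraorthogonal polynomial `Φ_{n+1}(z;λ) = zΦ_n(z) − conj(λ)Φ_n^*(z)` has `n+1`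
distinct zeros, all on the unit circle. -/
theorem popuc_zeros_on_circle
    (n : ℕ) (Φ : Polynomial ℂ) (hmonic : Φ.Monic) (hdeg : Φ.natDegree = n)
    (hzeros : ∀ z : ℂ, Φ.IsRoot z → ‖z‖ < 1)
    (lam : ℂ) (hlam : ‖lam‖ = 1) :
    ∃ S : Finset ℂ, S.card = n + 1 ∧
      (∀ u : ℂ, (X * Φ - C ((starRingEnd ℂ) lam) * polyStar n Φ).IsRoot u ↔ u ∈ S) ∧
      (∀ u ∈ S, ‖u‖ = 1) := by
  subst hdeg
  change ∃ S : Finset ℂ, S.card = Φ.natDegree + 1 ∧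
    (∀ u, (paraOrthogonal Φ lam).IsRoot u ↔ u ∈ S) ∧ ∀ u ∈ S, ‖u‖ = 1
  have hP0 : paraOrthogonal Φ lam ≠ 0 := (monic_paraOrthogonal hmonic lam).ne_zero
  have hnodup : (paraOrthogonal Φ lam).roots.Nodup :=
    nodup_roots_of_not_isRoot_derivative hP0 fun u hu =>
      hmonic.not_isRoot_derivative_paraOrthogonal hzeros hlam hu
  refine ⟨(paraOrthogonal Φ lam).roots.toFinset, ?_, fun u => ?_, fun u hu => ?_⟩
  · rw [Multiset.toFinset_card_of_nodup hnodup, IsAlgClosed.card_roots_eq_natDegree,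
      natDegree_paraOrthogonal hmonic.ne_zero]
  · rw [Multiset.mem_toFinset, mem_roots hP0]
  · exact hmonic.norm_eq_one_of_isRoot_paraOrthogonal hzeros hlam
      ((mem_roots hP0).mp (Multiset.mem_toFinset.mp hu))
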